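/- Let K ∈ ℕ and x, x' ∈ ℝ≥0 with x ≡^K x'. For every timestamp t1 t2 … tn, if τ_{x→x'}(t1 t2 … tn) = t'1 t'2 … t'n, then c^K(x t1 … t_{n−1}) + t_n ≡^K c^K(x' t'1 … t'_{n−1}) + t'_n, where x t1 … t_{n−1} denotes the timestamp obtained by prepending x to t1 … t_{n−1}. -/

import Mathlib

open scoped NNReal Classical

namespace IRTA

/-- A timestamp is a finite sequence of non-negative reals. -/
abbrev Timestamp : Type := List ℝ≥0

/-- A timed word is a finite sequence of (delay, letter) pairs. -/
abbrev TimedWord (A : Type) : Type := List (ℝ≥0 × A)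

/-- Fractional part of a non-negative real. -/
noncomputable def fracPart (x : ℝ≥0) : ℝ≥0 := x - (⌊x⌋₊ : ℝ≥0)

/-- `x` is a natural-number value. -/
def IsNatVal (x : ℝ≥0) : Prop := ∃ m : ℕ, x = (m : ℝ≥0)

/-- Region equivalence `≡^K`. -/
def RegEq (K : ℕ) (x y : ℝ≥0) : Prop :=
  (⌊x⌋₊ = ⌊y⌋₊ ∧ (fracPart x = 0 ↔ fracPart y = 0)) ∨ ((K : ℝ≥0) < x ∧ (K : ℝ≥0) < y)

/-- One step of the (greedy) clock evolution: reset whenever the value is an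
integer between `0` and `K`. -/
noncomputable def resetStep (K : ℕ) (v : ℝ≥0) : ℝ≥0 :=
  if ∃ m : ℕ, m ≤ K ∧ v = (m : ℝ≥0) then 0 else v

/-- Auxiliary function computing `c^K` with accumulator `v`. -/
noncomputable def cKAux (K : ℕ) : ℝ≥0 → Timestamp → ℝ≥0
  | v, [] => v
  | v, t :: d => cKAux K (resetStep K (v + t)) d

/-- `c^K(d)`: the sum of the delays after the last integral position of `d`. -/
noncomputable def cK (K : ℕ) (d : Timestamp) : ℝ≥0 := cKAux K 0 d

/-- `c^K` of a timed word is `c^K` of its timestamp. -/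
noncomputable def cKW {A : Type} (K : ℕ) (w : TimedWord A) : ℝ≥0 :=
  cK K (w.map Prod.fst)

/-- `c^K_⊤` : `c^K` truncated at `K`. -/
noncomputable def cKTop {A : Type} (K : ℕ) (w : TimedWord A) : WithTop ℝ≥0 :=
  if cKW K w ≤ (K : ℝ≥0) then ((cKW K w : ℝ≥0) : WithTop ℝ≥0) else ⊤

/-! ### Clock constraints and one-clock timed automata -/

/-- Clock constraints `φ ::= x < m | m < x | x = m | φ ∧ φ`. -/
inductive CC : Type where
  | lt : ℕ → CC
  | gt : ℕ → CC
  | eq : ℕ → CC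
  | and : CC → CC → CC

/-- Satisfaction of a clock constraint by a clock value. -/
def CC.sat : CC → ℝ≥0 → Prop
  | .lt m, x => x < (m : ℝ≥0)
  | .gt m, x => (m : ℝ≥0) < x
  | .eq m, x => x = (m : ℝ≥0)
  | .and φ ψ, x => φ.sat x ∧ ψ.sat x

/-- The largest constant appearing in a clock constraint. -/
def CC.maxConst : CC → ℕ
  | .lt m => m
  | .gt m => m
  | .eq m => m
  | .and φ ψ => max φ.maxConst ψ.maxConst

/-- A transition of a one-clock timed automaton; `reset = true` means the
clock is reset (the `r = 0` case). -/
structure TTrans (Q A : Type) where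
  src : Q
  dst : Q
  lab : A
  guard : CC
  reset : Bool

/-- A one-clock timed automaton. -/
structure TA (A : Type) where
  Q : Type
  init : Q
  final : Set Q
  trans : Set (TTrans Q A)

/-- The automaton has finitely many states and transitions. -/
def TA.IsFinite {A : Type} (M : TA A) : Prop := Finite M.Q ∧ M.trans.Finite

/-- Runs of a one-clock timed automaton between configurations. -/
inductive Steps {A : Type} (M : TA A) : M.Q × ℝ≥0 → TimedWord A → M.Q × ℝ≥0 → Prop
  | nil (c : M.Q × ℝ≥0) : Steps M c [] c
  | cons {q : M.Q} {ν t : ℝ≥0} {a : A} {w : TimedWord A} {c : M.Q × ℝ≥0}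
      (θ : TTrans M.Q A) (hθ : θ ∈ M.trans) (hsrc : θ.src = q) (hlab : θ.lab = a)
      (hg : θ.guard.sat (ν + t))
      (hrest : Steps M (θ.dst, if θ.reset then 0 else ν + t) w c) :
      Steps M (q, ν) ((t, a) :: w) c

/-- The language of `M` from a given configuration. -/
def TA.LangFrom {A : Type} (M : TA A) (c : M.Q × ℝ≥0) : Set (TimedWord A) :=
  {w | ∃ q' : M.Q, ∃ ν' : ℝ≥0, Steps M c w (q', ν') ∧ q' ∈ M.final}

/-- The language of `M` (from the initial configuration). -/
def TA.Lang {A : Type} (M : TA A) : Set (TimedWord A) := M.LangFrom (M.init, 0)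

/-- Determinism: distinct transitions with the same source and letter have
disjoint guards. -/
def TA.Deterministic {A : Type} (M : TA A) : Prop :=
  ∀ θ₁ ∈ M.trans, ∀ θ₂ ∈ M.trans, θ₁ ≠ θ₂ → θ₁.src = θ₂.src → θ₁.lab = θ₂.lab →
    ∀ x : ℝ≥0, ¬ (θ₁.guard.sat x ∧ θ₂.guard.sat x)

/-- Completeness: every timed word admits a run from the initial configuration. -/
def TA.Complete {A : Type} (M : TA A) : Prop :=
  ∀ w : TimedWord A, ∃ c : M.Q × ℝ≥0, Steps M (M.init, 0) w c

/-- A 1-IRTA: every resetting transition has an equality guard. -/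
def TA.IsIRTA {A : Type} (M : TA A) : Prop :=
  ∀ θ ∈ M.trans, θ.reset = true → ∃ m : ℕ, θ.guard = CC.eq m

/-- Guards allowed in a strict 1-IRTA with constant `K`. -/
def StrictGuard (K : ℕ) (φ : CC) : Prop :=
  (∃ m : ℕ, φ = CC.eq m) ∨ (∃ m : ℕ, φ = CC.and (CC.gt m) (CC.lt (m + 1))) ∨ φ = CC.gt K

/-- Strictness with constant `K`: every guard is of one of the allowed forms
and a guard is an equality iff the transition resets. -/
def TA.IsStrict {A : Type} (M : TA A) (K : ℕ) : Prop :=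
  ∀ θ ∈ M.trans, StrictGuard K θ.guard ∧ ((∃ m : ℕ, θ.guard = CC.eq m) ↔ θ.reset = true)

/-- All constants appearing in guards are at most `K`. -/
def TA.MaxConstLE {A : Type} (M : TA A) (K : ℕ) : Prop :=
  ∀ θ ∈ M.trans, θ.guard.maxConst ≤ K

/-- `M` reaches the same control state on reading `u` and `v` from the initial
configuration. -/
def TA.SameState {A : Type} (M : TA A) (u v : TimedWord A) : Prop :=
  ∃ q : M.Q, ∃ ν ν' : ℝ≥0, Steps M (M.init, 0) u (q, ν) ∧ Steps M (M.init, 0) v (q, ν')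

/-- A `K`-acceptor. -/
def IsKAcceptor {A : Type} (M : TA A) (K : ℕ) : Prop :=
  M.IsFinite ∧ M.Complete ∧ M.Deterministic ∧ M.IsIRTA ∧ M.IsStrict K ∧ M.MaxConstLE K ∧
    ∀ u v : TimedWord A, M.SameState u v → RegEq K (cKW K u) (cKW K v)

/-! ### Equivalences on timed words -/

/-- `L`-preservation of a relation on timed words. -/
def LPreserving {A : Type} (L : Set (TimedWord A)) (r : TimedWord A → TimedWord A → Prop) :
    Prop :=
  ∀ u v : TimedWord A, r u v → (u ∈ L ↔ v ∈ L)

/-- `K`-monotonicity of a relation on timed words. -/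
def KMonotonic {A : Type} (K : ℕ) (r : TimedWord A → TimedWord A → Prop) : Prop :=
  ∀ u v : TimedWord A, r u v →
    RegEq K (cKW K u) (cKW K v) ∧
      ∀ (a : A) (t t' : ℝ≥0), RegEq K (cKW K u + t) (cKW K v + t') →
        r (u ++ [(t, a)]) (v ++ [(t', a)])

/-- Finite index: there are finitely many classes `{v | r u v}`. -/
def FiniteIndex {A : Type} (r : TimedWord A → TimedWord A → Prop) : Prop :=
  Set.Finite (Set.range fun u : TimedWord A => {v : TimedWord A | r u v})

/-! ### The rescaling maps -/

/-- The bijection `f_{λ→λ'}` of the open unit interval. -/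
noncomputable def fScale (lam lam' t : ℝ≥0) : ℝ≥0 :=
  if t ≤ lam then (lam' / lam) * t else lam' + ((1 - lam') / (1 - lam)) * (t - lam)

/-- The new delay `t'` computed from the current clock values `y, y'` and delay `t`. -/
noncomputable def tauStep (K : ℕ) (y y' t : ℝ≥0) : ℝ≥0 :=
  if (IsNatVal y ∧ IsNatVal y') ∨ ((K : ℝ≥0) < y ∧ (K : ℝ≥0) < y') then t
  else (⌊t⌋₊ : ℝ≥0) + fScale (1 - fracPart y) (1 - fracPart y') (fracPart t)

/-- Auxiliary rescaling map on timestamps, carrying the current clock values. -/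
noncomputable def tauAux (K : ℕ) : ℝ≥0 → ℝ≥0 → Timestamp → Timestamp
  | _, _, [] => []
  | y, y', t :: d =>
      tauStep K y y' t ::
        tauAux K (resetStep K (y + t)) (resetStep K (y' + tauStep K y y' t)) d

/-- The rescaling map `τ_{x→x'}` on timestamps. -/
noncomputable def tau (K : ℕ) (x x' : ℝ≥0) (d : Timestamp) : Timestamp :=
  tauAux K (resetStep K x) (resetStep K x') d

/-- Auxiliary rescaling map on timed words. -/
noncomputable def tauWAux {A : Type} (K : ℕ) : ℝ≥0 → ℝ≥0 → TimedWord A → TimedWord A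
  | _, _, [] => []
  | y, y', (t, a) :: w =>
      (tauStep K y y' t, a) ::
        tauWAux K (resetStep K (y + t)) (resetStep K (y' + tauStep K y y' t)) w

/-- The rescaling map `τ_{x→x'}` on timed words. -/
noncomputable def tauW {A : Type} (K : ℕ) (x x' : ℝ≥0) (w : TimedWord A) : TimedWord A :=
  tauWAux K (resetStep K x) (resetStep K x') w

/-! ### Residuals and the syntactic equivalence -/

/-- The residual language `u^{-1}L`. -/
def residual {A : Type} (L : Set (TimedWord A)) (u : TimedWord A) : Set (TimedWord A) :=
  {w : TimedWord A | u ++ w ∈ L}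

/-- The syntactic equivalence `≈^{L,K}`. -/
def ApproxLK {A : Type} (L : Set (TimedWord A)) (K : ℕ) (u v : TimedWord A) : Prop :=
  RegEq K (cKW K u) (cKW K v) ∧
    (tauW K (cKW K u) (cKW K v)) '' (residual L u) = residual L v

/-! ### The automaton built from a monotonic equivalence -/

/-- The region guard `φ([t])`. -/
noncomputable def phiOf (K : ℕ) (t : ℝ≥0) : CC :=
  if t ≤ (K : ℝ≥0) then
    (if IsNatVal t then CC.eq ⌊t⌋₊ else CC.and (CC.gt ⌊t⌋₊) (CC.lt (⌊t⌋₊ + 1)))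
  else CC.gt K

/-- The automaton `A_≈` built from an equivalence `s` on timed words. -/
noncomputable def Aapprox {A : Type} (L : Set (TimedWord A)) (K : ℕ)
    (s : Setoid (TimedWord A)) : TA A where
  Q := Quotient s
  init := Quotient.mk s ([] : TimedWord A)
  final := {q : Quotient s | ∃ u : TimedWord A, q = Quotient.mk s u ∧ u ∈ L}
  trans := {θ : TTrans (Quotient s) A |
    ∃ (u : TimedWord A) (a : A) (t : ℝ≥0),
      θ.src = Quotient.mk s u ∧ θ.dst = Quotient.mk s (u ++ [(t, a)]) ∧ θ.lab = a ∧
      θ.guard = phiOf K (cKW K u + t) ∧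
      (θ.reset = true ↔ ∃ m : ℕ, m ≤ K ∧ cKW K u + t = (m : ℝ≥0))}

/-! ### Half-integral and small words -/

/-- Every delay has fractional part `0` or `1/2`. -/
def HalfIntegral {A : Type} (w : TimedWord A) : Prop :=
  ∀ p ∈ w, fracPart p.1 = 0 ∨ fracPart p.1 = 1 / 2

/-- Every delay is `< K + 1`. -/
def SmallWord {A : Type} (K : ℕ) (w : TimedWord A) : Prop :=
  ∀ p ∈ w, p.1 < (K : ℝ≥0) + 1

/-- The delays of `Σ_K`: half-integral values `≤ K + 1/2`. -/
def IsSigmaK (K : ℕ) (t : ℝ≥0) : Prop :=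
  (fracPart t = 0 ∨ fracPart t = 1 / 2) ∧ t ≤ (K : ℝ≥0) + 1 / 2

/-- Words over `Σ_K` (small half-integral words). -/
def SigmaWord {A : Type} (K : ℕ) (w : TimedWord A) : Prop :=
  ∀ p ∈ w, IsSigmaK K p.1



/-! ### `K`-acceptors with their region representatives -/

/-- A `K`-acceptor bundled with the half-integral representative of the
unique region of each state. -/
structure KAcc (A : Type) (K : ℕ) where
  M : TA A
  acc : IsKAcceptor M K
  reg : M.Q → ℝ≥0
  regHalf : ∀ q : M.Q, fracPart (reg q) = 0 ∨ fracPart (reg q) = 1 / 2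
  regLe : ∀ q : M.Q, reg q ≤ (K : ℝ≥0) + 1 / 2
  regSpec : ∀ (w : TimedWord A) (q : M.Q) (x : ℝ≥0),
    Steps M (M.init, 0) w (q, x) → RegEq K x (reg q)

/-- The minimization equivalences `∼^i` on the states of a `K`-acceptor. -/
def simEq {A : Type} {K : ℕ} (B : KAcc A K) : ℕ → B.M.Q → B.M.Q → Prop
  | 0, p, q => B.reg p = B.reg q ∧ (p ∈ B.M.final ↔ q ∈ B.M.final)
  | i + 1, p, q => simEq B i p q ∧
      ∀ (t : ℝ≥0) (a : A), IsSigmaK K t →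
        ∀ θ₁ θ₂ : TTrans B.M.Q A, θ₁ ∈ B.M.trans → θ₂ ∈ B.M.trans →
          θ₁.src = p → θ₂.src = q → θ₁.lab = a → θ₂.lab = a →
          θ₁.guard = phiOf K t → θ₂.guard = phiOf K t →
          simEq B i θ₁.dst θ₂.dst

/-- The quotient automaton `B/∼^m`. -/
noncomputable def quotTA {A : Type} {K : ℕ} (B : KAcc A K) (m : ℕ) : TA A where
  Q := Quot (simEq B m)
  init := Quot.mk (simEq B m) B.M.init
  final := {c : Quot (simEq B m) | ∃ q ∈ B.M.final, c = Quot.mk (simEq B m) q}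
  trans := {θ : TTrans (Quot (simEq B m)) A |
    ∃ θ₀ ∈ B.M.trans,
      θ.src = Quot.mk (simEq B m) θ₀.src ∧ θ.dst = Quot.mk (simEq B m) θ₀.dst ∧
      θ.lab = θ₀.lab ∧ θ.guard = θ₀.guard ∧ θ.reset = θ₀.reset}

/-! ### Observation tables -/

/-- An observation table over `Σ_K`. -/
structure ObsTable (A : Type) (K : ℕ) where
  U1 : Set (TimedWord A)
  E : Set (TimedWord A)
  val : TimedWord A → TimedWord A → Bool
  U1fin : U1.Finite
  Efin : E.Finite
  U1sigma : ∀ u ∈ U1, SigmaWord K u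
  Esigma : ∀ e ∈ E, SigmaWord K e
  epsU1 : ([] : TimedWord A) ∈ U1
  prefixClosed : ∀ (u : TimedWord A) (x : ℝ≥0 × A), u ++ [x] ∈ U1 → u ∈ U1
  epsE : ([] : TimedWord A) ∈ E
  suffixClosed : ∀ (x : ℝ≥0 × A) (e : TimedWord A), x :: e ∈ E → e ∈ E

/-- The set `U2` of one-letter `Σ_K`-extensions of `U1`. -/
def obsU2 {A : Type} {K : ℕ} (T : ObsTable A K) : Set (TimedWord A) :=
  {w : TimedWord A | ∃ u ∈ T.U1, ∃ (t : ℝ≥0) (a : A), IsSigmaK K t ∧ w = u ++ [(t, a)]}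

/-- `R(u)`: the row of `u` (restricted to `E`) together with `c^K_⊤(u)`. -/
noncomputable def Rof {A : Type} {K : ℕ} (T : ObsTable A K) (u : TimedWord A) :
    ({e : TimedWord A // e ∈ T.E} → Bool) × WithTop ℝ≥0 :=
  (fun e => T.val u e.1, cKTop K u)

/-- The table is closed. -/
def ObsTable.Closed {A : Type} {K : ℕ} (T : ObsTable A K) : Prop :=
  ∀ w ∈ obsU2 T, ∃ u ∈ T.U1, Rof T w = Rof T u

/-- The table is consistent. -/
def ObsTable.Consistent {A : Type} {K : ℕ} (T : ObsTable A K) : Prop :=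
  ∀ u ∈ T.U1, ∀ w ∈ T.U1, Rof T u = Rof T w →
    ∀ (t : ℝ≥0) (a : A), IsSigmaK K t → Rof T (u ++ [(t, a)]) = Rof T (w ++ [(t, a)])

/-- The automaton `A_𝒯` induced by a (closed and consistent) observation table. -/
noncomputable def ATable {A : Type} {K : ℕ} (T : ObsTable A K) : TA A where
  Q := {f : ({e : TimedWord A // e ∈ T.E} → Bool) × WithTop ℝ≥0 // ∃ u ∈ T.U1, f = Rof T u}
  init := ⟨Rof T [], ⟨[], T.epsU1, rfl⟩⟩
  final := {q | ∃ u ∈ T.U1, q.1 = Rof T u ∧ T.val u [] = true}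
  trans := {θ | ∃ u ∈ T.U1, ∃ (t : ℝ≥0) (a : A), IsSigmaK K t ∧
      θ.src.1 = Rof T u ∧ θ.dst.1 = Rof T (u ++ [(t, a)]) ∧ θ.lab = a ∧
      θ.guard = phiOf K (cKW K u + t) ∧
      (θ.reset = true ↔ ∃ m : ℕ, m ≤ K ∧ cKW K u + t = (m : ℝ≥0))}

/-- A `K`-acceptor is consistent with the observation table `𝒯`. -/
def ConsistentWith {A : Type} {K : ℕ} (M : TA A) (T : ObsTable A K) : Prop :=
  ∀ w : TimedWord A, (w ∈ T.U1 ∨ w ∈ obsU2 T) → ∀ e ∈ T.E,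
    ∀ (q : M.Q) (ν : ℝ≥0), Steps M (M.init, 0) (w ++ e) (q, ν) →
      (q ∈ M.final ↔ T.val w e = true)

/-- Isomorphism of one-clock timed automata. -/
structure TAIso {A : Type} (M N : TA A) where
  toEquiv : M.Q ≃ N.Q
  init_eq : toEquiv M.init = N.init
  final_iff : ∀ q : M.Q, q ∈ M.final ↔ toEquiv q ∈ N.final
  trans_iff : ∀ θ : TTrans M.Q A,
    θ ∈ M.trans ↔
      (⟨toEquiv θ.src, toEquiv θ.dst, θ.lab, θ.guard, θ.reset⟩ : TTrans N.Q A) ∈ N.trans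

/-! When the clocks `y ≡ y'` are integral or both above `K`, `τ` copies the delay and the sums
stay equivalent trivially. Otherwise `{y}, {y'} ≠ 0` and the delay `t` crosses the next integer
exactly when `{t}` exceeds `1 - {y}`; the map `f_{1-{y}→1-{y'}}` is an increasing bijection
sending `1 - {y}` to `1 - {y'}`, so `{t'}` is on the same side of `1 - {y'}` and
`y + t ≡ y' + t'`. Resets preserve `≡`, so by induction over the timestamp the clocks
`c^K(x t₁ … tᵢ)` and `c^K(x' t'₁ … t'ᵢ)` stay equivalent, which gives the claim at the last delay. -/

lemma floor_add_fracPart (x : ℝ≥0) : (⌊x⌋₊ : ℝ≥0) + fracPart x = x :=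
  add_tsub_cancel_of_le (Nat.floor_le zero_le)

lemma fracPart_lt_one (x : ℝ≥0) : fracPart x < 1 := by
  rw [fracPart, tsub_lt_iff_left (Nat.floor_le zero_le)]
  exact Nat.lt_floor_add_one x

lemma floor_natCast_add {n : ℕ} {r : ℝ≥0} (hr : r < 1) : ⌊(n : ℝ≥0) + r⌋₊ = n :=
  (Nat.floor_eq_iff zero_le).mpr ⟨le_self_add, add_lt_add_right hr _⟩

lemma fracPart_natCast_add {n : ℕ} {r : ℝ≥0} (hr : r < 1) :
    fracPart ((n : ℝ≥0) + r) = r := by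
  rw [fracPart, floor_natCast_add hr, add_tsub_cancel_left]

lemma isNatVal_of_fracPart_eq_zero {x : ℝ≥0} (h : fracPart x = 0) : IsNatVal x :=
  ⟨⌊x⌋₊, by simpa [h] using (floor_add_fracPart x).symm⟩

lemma RegEq.refl (K : ℕ) (x : ℝ≥0) : RegEq K x x := Or.inl ⟨rfl, Iff.rfl⟩

lemma RegEq.symm {K : ℕ} {a b : ℝ≥0} (h : RegEq K a b) : RegEq K b a :=
  h.imp (fun h => ⟨h.1.symm, h.2.symm⟩) And.symm

lemma RegEq.eq_natCast {K m : ℕ} {a b : ℝ≥0} (h : RegEq K a b) (hm : m ≤ K)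
    (ha : a = m) : b = m := by
  subst ha
  rcases h with ⟨hfl, hfr⟩ | ⟨ha, -⟩
  · have hfb : fracPart b = 0 := hfr.1 (by simpa using fracPart_natCast_add (n := m) one_pos)
    rw [← floor_add_fracPart b, hfb, add_zero, ← hfl, Nat.floor_natCast]
  · exact absurd (Nat.cast_le.mpr hm) ha.not_ge

lemma regEq_resetStep {K : ℕ} {a b : ℝ≥0} (h : RegEq K a b) :
    RegEq K (resetStep K a) (resetStep K b) := by
  have hiff : (∃ m : ℕ, m ≤ K ∧ a = m) ↔ ∃ m : ℕ, m ≤ K ∧ b = m :=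
    ⟨fun ⟨m, hm, ha⟩ => ⟨m, hm, h.eq_natCast hm ha⟩,
      fun ⟨m, hm, hb⟩ => ⟨m, hm, h.symm.eq_natCast hm hb⟩⟩
  unfold resetStep
  by_cases ha : ∃ m : ℕ, m ≤ K ∧ a = m
  · rw [if_pos ha, if_pos (hiff.1 ha)]
    exact RegEq.refl K 0
  · rw [if_neg ha, if_neg (hiff.not.1 ha)]
    exact h

lemma regEq_natCast_add_of_lt_one (K k : ℕ) {r r' : ℝ≥0} (hr : r < 1) (hr' : r' < 1)
    (h0 : r = 0 ↔ r' = 0) : RegEq K ((k : ℝ≥0) + r) ((k : ℝ≥0) + r') := by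
  left
  rw [floor_natCast_add hr, floor_natCast_add hr', fracPart_natCast_add hr,
    fracPart_natCast_add hr']
  exact ⟨rfl, h0⟩

lemma regEq_natCast_add (K k : ℕ) {r r' : ℝ≥0} (hr : r < 2) (hr' : r' < 2)
    (hr0 : r ≠ 0) (hr0' : r' ≠ 0) (hlt : r < 1 ↔ r' < 1) (heq : r = 1 ↔ r' = 1) :
    RegEq K ((k : ℝ≥0) + r) ((k : ℝ≥0) + r') := by
  rcases lt_trichotomy r 1 with hr1 | hr1 | hr1
  · exact regEq_natCast_add_of_lt_one K k hr1 (hlt.1 hr1) (iff_of_false hr0 hr0')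
  · rw [hr1, heq.1 hr1]
    exact RegEq.refl K _
  · have hr1' : 1 < r' := lt_of_le_of_ne (not_lt.1 (hlt.not.1 hr1.not_gt))
      (Ne.symm (heq.not.1 hr1.ne'))
    have hsplit : ∀ s : ℝ≥0, 1 < s → (k : ℝ≥0) + s = ((k + 1 : ℕ) : ℝ≥0) + (s - 1) :=
      fun s hs => by push_cast; rw [add_assoc, add_tsub_cancel_of_le hs.le]
    have hsub : ∀ s : ℝ≥0, 1 < s → s < 2 → s - 1 < 1 := fun s hs1 hs2 =>
      (tsub_lt_iff_left hs1.le).2 (hs2.trans_eq one_add_one_eq_two.symm)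
    rw [hsplit r hr1, hsplit r' hr1']
    exact regEq_natCast_add_of_lt_one K (k + 1) (hsub r hr1 hr) (hsub r' hr1' hr')
      (iff_of_false (tsub_pos_of_lt hr1).ne' (tsub_pos_of_lt hr1').ne')

lemma regEq_add_of_floor_eq {K : ℕ} {y y' t t' : ℝ≥0} (hy : ⌊y⌋₊ = ⌊y'⌋₊)
    (ht : ⌊t⌋₊ = ⌊t'⌋₊) (hfy : fracPart y ≠ 0) (hfy' : fracPart y' ≠ 0)
    (hlt : fracPart t < 1 - fracPart y ↔ fracPart t' < 1 - fracPart y')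
    (heq : fracPart t = 1 - fracPart y ↔ fracPart t' = 1 - fracPart y') :
    RegEq K (y + t) (y' + t') := by
  have hsplit : ∀ z s : ℝ≥0,
      z + s = ((⌊z⌋₊ + ⌊s⌋₊ : ℕ) : ℝ≥0) + (fracPart z + fracPart s) := fun z s => by
    conv_lhs => rw [← floor_add_fracPart z, ← floor_add_fracPart s]
    push_cast
    ring
  have hlt_two : ∀ z s : ℝ≥0, fracPart z + fracPart s < 2 := fun z s =>
    (add_lt_add (fracPart_lt_one z) (fracPart_lt_one s)).trans_eq one_add_one_eq_two
  rw [hsplit y t, hsplit y' t', hy, ht]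
  rw [lt_tsub_iff_left, lt_tsub_iff_left] at hlt
  rw [eq_tsub_iff_add_eq_of_le (fracPart_lt_one y).le,
    eq_tsub_iff_add_eq_of_le (fracPart_lt_one y').le, add_comm (fracPart t),
    add_comm (fracPart t')] at heq
  exact regEq_natCast_add K _ (hlt_two y t) (hlt_two y' t')
    (fun h => hfy (add_eq_zero.1 h).1) (fun h => hfy' (add_eq_zero.1 h).1) hlt heq

section fScale

variable {lam lam' : ℝ≥0}

lemma fScale_self (hlam : lam ≠ 0) : fScale lam lam' lam = lam' := by
  rw [fScale, if_pos le_rfl, div_mul_cancel₀ _ hlam]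

lemma fScale_one (hlam : lam < 1) (hlam' : lam' < 1) : fScale lam lam' 1 = 1 := by
  rw [fScale, if_neg hlam.not_ge, div_mul_cancel₀ _ (tsub_pos_of_lt hlam).ne',
    add_tsub_cancel_of_le hlam'.le]

lemma strictMono_fScale (h0 : 0 < lam) (h0' : 0 < lam') (h1 : lam < 1) (h1' : lam' < 1) :
    StrictMono (fScale lam lam') := by
  intro a b hab
  by_cases hb : b ≤ lam
  · rw [fScale, fScale, if_pos (hab.le.trans hb), if_pos hb]
    exact mul_lt_mul_of_pos_left hab (div_pos h0' h0)
  have hslope : 0 < (1 - lam') / (1 - lam) := div_pos (tsub_pos_of_lt h1') (tsub_pos_of_lt h1)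
  have hb' : lam' < fScale lam lam' b := by
    rw [fScale, if_neg hb]
    exact lt_add_of_pos_right _ (mul_pos hslope (tsub_pos_of_lt (not_le.1 hb)))
  by_cases ha : a ≤ lam
  · calc fScale lam lam' a = lam' / lam * a := if_pos ha
      _ ≤ lam' / lam * lam := mul_le_mul_of_nonneg_left ha zero_le
      _ = lam' := div_mul_cancel₀ _ h0.ne'
      _ < fScale lam lam' b := hb'
  · rw [fScale, fScale, if_neg ha, if_neg hb]
    exact add_lt_add_right (mul_lt_mul_of_pos_left
      ((tsub_lt_tsub_iff_right (not_le.1 ha).le).2 hab) hslope) _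

end fScale

lemma regEq_add_tauStep {K : ℕ} {y y' : ℝ≥0} (h : RegEq K y y') (t : ℝ≥0) :
    RegEq K (y + t) (y' + tauStep K y y' t) := by
  by_cases hK : (K : ℝ≥0) < y ∧ (K : ℝ≥0) < y'
  · exact Or.inr ⟨hK.1.trans_le le_self_add, hK.2.trans_le le_self_add⟩
  obtain ⟨hfl, hfr⟩ := h.resolve_right hK
  unfold tauStep
  split_ifs with hc
  · obtain ⟨⟨m, rfl⟩, ⟨m', rfl⟩⟩ := hc.resolve_right hK
    rw [Nat.floor_natCast, Nat.floor_natCast] at hfl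
    rw [hfl]
    exact RegEq.refl K _
  have hfy : fracPart y ≠ 0 := fun h0 =>
    hc (Or.inl ⟨isNatVal_of_fracPart_eq_zero h0, isNatVal_of_fracPart_eq_zero (hfr.1 h0)⟩)
  have hfy' : fracPart y' ≠ 0 := fun h0 => hfy (hfr.2 h0)
  have hlam : ∀ z : ℝ≥0, fracPart z ≠ 0 → 0 < 1 - fracPart z ∧ 1 - fracPart z < 1 :=
    fun z hz => ⟨tsub_pos_of_lt (fracPart_lt_one z), tsub_lt_self one_pos (pos_iff_ne_zero.2 hz)⟩
  have hmono := strictMono_fScale (hlam y hfy).1 (hlam y' hfy').1 (hlam y hfy).2 (hlam y' hfy').2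
  have hs' : fScale (1 - fracPart y) (1 - fracPart y') (fracPart t) < 1 :=
    (hmono (fracPart_lt_one t)).trans_eq (fScale_one (hlam y hfy).2 (hlam y' hfy').2)
  have hself : fScale (1 - fracPart y) (1 - fracPart y') (1 - fracPart y) = 1 - fracPart y' :=
    fScale_self (hlam y hfy).1.ne'
  refine regEq_add_of_floor_eq hfl (floor_natCast_add hs').symm hfy hfy' ?_ ?_ <;>
    rw [fracPart_natCast_add hs']
  · simpa only [hself] using (hmono.lt_iff_lt (a := fracPart t) (b := 1 - fracPart y)).symm
  · simpa only [hself] using (hmono.injective.eq_iff (a := fracPart t) (b := 1 - fracPart y)).symm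

lemma regEq_cKAux (K : ℕ) : ∀ (d : Timestamp) {y y' : ℝ≥0}, RegEq K y y' →
    RegEq K (cKAux K y d) (cKAux K y' (tauAux K y y' d))
  | [], _, _, h => h
  | t :: d, _, _, h => regEq_cKAux K d (regEq_resetStep (regEq_add_tauStep h t))

lemma tauAux_append (K : ℕ) : ∀ (d : Timestamp) (y y' t : ℝ≥0),
    tauAux K y y' (d ++ [t]) =
      tauAux K y y' d ++ [tauStep K (cKAux K y d) (cKAux K y' (tauAux K y y' d)) t]
  | [], _, _, _ => rfl
  | s :: d, y, y', t => by
    simp only [List.cons_append, tauAux, cKAux, tauAux_append]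

lemma cK_cons (K : ℕ) (x : ℝ≥0) (d : Timestamp) : cK K (x :: d) = cKAux K (resetStep K x) d := by
  rw [cK, cKAux, zero_add]

/-- property (1) of the rescaling bijection. -/
theorem statement4 (K : ℕ) (x x' : ℝ≥0) (h : RegEq K x x') (d : Timestamp) (t t' : ℝ≥0)
    (h2 : tau K x x' (d ++ [t]) = tau K x x' d ++ [t']) :
    RegEq K (cK K (x :: d) + t) (cK K (x' :: tau K x x' d) + t') := by
  rw [tau, tau, tauAux_append, List.append_cancel_left_eq, List.singleton_inj] at h2
  rw [cK_cons, cK_cons, tau, ← h2]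
  exact regEq_add_tauStep (regEq_cKAux K d (regEq_resetStep h)) t

end IRTA
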